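/- Suppose κ is a regular limit cardinal. Then every ideal J on κ with cof(J) < U_κ is a weak semi-Q-point; consequently U_κ ≤ non_κ(weak semi-Q-point). -/

import Mathlib

open Cardinal Set

namespace PaperFormal

noncomputable section

/-- The least (small) cardinality of a family `F : Set X` satisfying `P`. -/
def leastCard {X : Type 1} (P : Set X → Prop) : Cardinal.{0} :=
  sInf {c : Cardinal.{0} | ∃ F : Set X, P F ∧ Cardinal.lift.{1} c = #F}

/-- The collection of (codings of) functions from `κ` to `κ`. -/
def funOn (κ : Cardinal.{0}) : Set (Ordinal.{0} → Ordinal.{0}) :=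
  {f | ∀ α < κ.ord, f α < κ.ord}

/-- The unequality number `U_κ`. -/
def uneq (κ : Cardinal.{0}) : Cardinal.{0} :=
  leastCard fun F : Set (Ordinal.{0} → Ordinal.{0}) => F ⊆ funOn κ ∧
    ∀ g ∈ funOn κ, ∃ f ∈ F, {α | α < κ.ord ∧ f α = g α} = ∅

/-- The dominating number `d_κ`. -/
def domNum (κ : Cardinal.{0}) : Cardinal.{0} :=
  leastCard fun F : Set (Ordinal.{0} → Ordinal.{0}) => F ⊆ funOn κ ∧
    ∀ g ∈ funOn κ, ∃ f ∈ F, ∀ α < κ.ord, g α < f α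

/-- The number `d̄_κ`. -/
def domBar (κ : Cardinal.{0}) : Cardinal.{0} :=
  leastCard fun X : Set (Ordinal.{0} → Ordinal.{0}) => X ⊆ funOn κ ∧
    ∀ g ∈ funOn κ, ∃ x ⊆ X, x.Nonempty ∧ #x < Cardinal.lift.{1} κ ∧
      ∀ α < κ.ord, g α < sSup {o | ∃ f ∈ x, f α = o}

/-- The generalized Cantor space `^ρ2`, with points coded as subsets of `Iio ρ.ord`. -/
def cantor (ρ : Cardinal.{0}) : Set (Set Ordinal.{0}) := {x | x ⊆ Iio ρ.ord}

/-- A forcing condition: a pair `(a, t)` with `t ⊆ a ⊆ Iio ρ.ord` and `|a| < ν`. -/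
def IsCond (ν ρ : Cardinal.{0}) (a t : Set Ordinal.{0}) : Prop :=
  a ⊆ Iio ρ.ord ∧ t ⊆ a ∧ #a < Cardinal.lift.{1} ν

/-- The basic open set determined by a condition. -/
def basicOpen (ρ : Cardinal.{0}) (a t : Set Ordinal.{0}) : Set (Set Ordinal.{0}) :=
  {x | x ⊆ Iio ρ.ord ∧ x ∩ a = t}

/-- Dense open subsets of `^ρ2` (for the `<ν`-support topology). -/
def DenseOpen (ν ρ : Cardinal.{0}) (D : Set (Set Ordinal.{0})) : Prop :=
  D ⊆ cantor ρ ∧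
  (∀ x ∈ D, ∃ a t, IsCond ν ρ a t ∧ x ∈ basicOpen ρ a t ∧ basicOpen ρ a t ⊆ D) ∧
  (∀ a t, IsCond ν ρ a t → (basicOpen ρ a t ∩ D).Nonempty)

/-- Members of `M_{ν,ρ}`. -/
def Meager (ν ρ : Cardinal.{0}) (W : Set (Set Ordinal.{0})) : Prop :=
  W ⊆ cantor ρ ∧ ∃ X : Set (Set (Set Ordinal.{0})), X.Nonempty ∧
    #X ≤ Cardinal.lift.{1} ν ∧ (∀ D ∈ X, DenseOpen ν ρ D) ∧ W ∩ ⋂₀ X = ∅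

/-- The covering number for category `cov(M_{ν,ρ})`. -/
def covM (ν ρ : Cardinal.{0}) : Cardinal.{0} :=
  leastCard fun Y : Set (Set (Set Ordinal.{0})) =>
    (∀ W ∈ Y, Meager ν ρ W) ∧ ⋃₀ Y = cantor ρ

/-- A (`κ`-complete) ideal on `κ`. -/
structure IdealK (κ : Cardinal.{0}) where
  mem : Set (Set Ordinal.{0})
  subset_iio : ∀ A ∈ mem, A ⊆ Iio κ.ord
  singleton_mem : ∀ α < κ.ord, {α} ∈ mem
  subset_mem : ∀ A ∈ mem, ∀ B ⊆ A, B ∈ mem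
  sUnion_mem : ∀ X : Set (Set Ordinal.{0}), X ⊆ mem → #X < Cardinal.lift.{1} κ → ⋃₀ X ∈ mem
  ne_top : Iio κ.ord ∉ mem

/-- `J⁺`, the sets (⊆ κ) not in the ideal. -/
def IdealK.plus {κ : Cardinal.{0}} (J : IdealK κ) : Set (Set Ordinal.{0}) :=
  {A | A ⊆ Iio κ.ord ∧ A ∉ J.mem}

/-- `cof(J)`. -/
def IdealK.cof {κ : Cardinal.{0}} (J : IdealK κ) : Cardinal.{0} :=
  leastCard fun X : Set (Set Ordinal.{0}) =>
    X ⊆ J.mem ∧ ∀ A, A ∈ J.mem ↔ ∃ B ∈ X, A ⊆ B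

/-- `cof̄(J)`. -/
def IdealK.cofBar {κ : Cardinal.{0}} (J : IdealK κ) : Cardinal.{0} :=
  leastCard fun X : Set (Set Ordinal.{0}) =>
    X ⊆ J.mem ∧ ∀ A ∈ J.mem, ∃ x ⊆ X, #x < Cardinal.lift.{1} κ ∧ A ⊆ ⋃₀ x

/-- `non_κ(P)`. -/
def nonK (κ : Cardinal.{0}) (P : IdealK κ → Prop) : Cardinal.{0} :=
  sInf {c | ∃ J : IdealK κ, J.cof = c ∧ ¬ P J}

/-- `non̄_κ(P)`. -/
def nonBarK (κ : Cardinal.{0}) (P : IdealK κ → Prop) : Cardinal.{0} :=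
  sInf {c | ∃ J : IdealK κ, J.cofBar = c ∧ ¬ P J}

/-- Weak `P`-point. -/
def WeakPPoint {κ : Cardinal.{0}} (J : IdealK κ) : Prop :=
  ∀ A ∈ J.plus, ∀ f : Ordinal.{0} → Ordinal.{0},
    (∀ α ∈ A, f α < κ.ord) → (∀ β, {α ∈ A | f α = β} ∈ J.mem) →
    ∃ B ∈ J.plus, B ⊆ A ∧ ∀ β, #{α ∈ B | f α = β} < Cardinal.lift.{1} κ

/-- Weak `Q`-point. -/
def WeakQPoint {κ : Cardinal.{0}} (J : IdealK κ) : Prop :=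
  ∀ A ∈ J.plus, ∀ g ∈ funOn κ,
    ∃ B ∈ J.plus, B ⊆ A ∧ ∀ α ∈ B, ∀ β ∈ B, α < β → g α < β

/-- Weakly selective ideal. -/
def WeaklySelective {κ : Cardinal.{0}} (J : IdealK κ) : Prop :=
  WeakPPoint J ∧ WeakQPoint J

/-- Weak semi-`Q`-point. -/
def WeakSemiQPoint {κ : Cardinal.{0}} (J : IdealK κ) : Prop :=
  ∀ A ∈ J.plus, ∀ f : Ordinal.{0} → Ordinal.{0},
    (∀ α ∈ A, f α < κ.ord) →
    (∀ β, #{α ∈ A | f α = β} < Cardinal.lift.{1} κ) →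
    ∃ C ∈ J.plus, C ⊆ A ∧ ∀ β < κ.ord, #{α ∈ C | f α = β} ≤ Cardinal.lift.{1} β.card

/-- `P_κ(λ)`, coded as the small subsets of `Iio λ.ord`. -/
def smallSet (κ lam : Cardinal.{0}) : Set (Set Ordinal.{0}) :=
  {a | a ⊆ Iio lam.ord ∧ #a < Cardinal.lift.{1} κ}

/-- The ideal `I_{κ,λ}` of noncofinal subsets of `P_κ(λ)`. -/
def Ikl (κ lam : Cardinal.{0}) : Set (Set (Set Ordinal.{0})) :=
  {A | A ⊆ smallSet κ lam ∧ ∃ a ∈ smallSet κ lam, ∀ b ∈ A, ¬ a ⊆ b}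

/-- A (`κ`-complete fine) ideal on `P_κ(λ)`. -/
structure IdealP (κ lam : Cardinal.{0}) where
  mem : Set (Set (Set Ordinal.{0}))
  subset_pk : ∀ A ∈ mem, A ⊆ smallSet κ lam
  fine : Ikl κ lam ⊆ mem
  subset_mem : ∀ A ∈ mem, ∀ B ⊆ A, B ∈ mem
  sUnion_mem : ∀ X : Set (Set (Set Ordinal.{0})), X ⊆ mem →
    #X < Cardinal.lift.{1} κ → ⋃₀ X ∈ mem
  ne_top : smallSet κ lam ∉ mem

/-- `H⁺` computed from the underlying collection `Hm` of an ideal on `P_κ(λ)`. -/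
def plusOf (κ lam : Cardinal.{0}) (Hm : Set (Set (Set Ordinal.{0}))) :
    Set (Set (Set Ordinal.{0})) :=
  {A | A ⊆ smallSet κ lam ∧ A ∉ Hm}

/-- `H⁺`. -/
def IdealP.plus {κ lam : Cardinal.{0}} (H : IdealP κ lam) : Set (Set (Set Ordinal.{0})) :=
  plusOf κ lam H.mem

/-- `cof(H)`. -/
def IdealP.cof {κ lam : Cardinal.{0}} (H : IdealP κ lam) : Cardinal.{0} :=
  leastCard fun X : Set (Set (Set Ordinal.{0})) =>
    X ⊆ H.mem ∧ ∀ A, A ∈ H.mem ↔ ∃ B ∈ X, A ⊆ B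

/-- `cof̄(H)`. -/
def IdealP.cofBar {κ lam : Cardinal.{0}} (H : IdealP κ lam) : Cardinal.{0} :=
  leastCard fun X : Set (Set (Set Ordinal.{0})) =>
    X ⊆ H.mem ∧ ∀ A ∈ H.mem, ∃ x ⊆ X, #x < Cardinal.lift.{1} κ ∧ A ⊆ ⋃₀ x

/-- `d^κ_{κ,λ}`. -/
def domP (κ lam : Cardinal.{0}) : Cardinal.{0} :=
  leastCard fun F : Set (Ordinal.{0} → Set Ordinal.{0}) =>
    (∀ f ∈ F, ∀ α < κ.ord, f α ∈ smallSet κ lam) ∧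
    ∀ g : Ordinal.{0} → Set Ordinal.{0}, (∀ α < κ.ord, g α ∈ smallSet κ lam) →
      ∃ f ∈ F, ∀ α < κ.ord, g α ⊆ f α

/-- A maximal almost disjoint family of size `≥ κ` for `H` (a member of `M_H^{≥κ}`). -/
def IsMad {κ lam : Cardinal.{0}} (H : IdealP κ lam) (Q : Set (Set (Set Ordinal.{0}))) : Prop :=
  Q ⊆ H.plus ∧ Cardinal.lift.{1} κ ≤ #Q ∧
  (∀ A ∈ Q, ∀ B ∈ Q, A ≠ B → A ∩ B ∈ H.mem) ∧
  ∀ C ∈ H.plus, ∃ A ∈ Q, A ∩ C ∈ H.plus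

/-- The (small) cardinal `c` with `lift c = c'`, used to pull `λ^{<κ} = |P_κ(λ)|` down. -/
def downCard (c : Cardinal.{1}) : Cardinal.{0} :=
  sInf {d : Cardinal.{0} | Cardinal.lift.{1} d = c}

open Classical in
/-- The number `a_H`. -/
def aNum {κ lam : Cardinal.{0}} (H : IdealP κ lam) : Cardinal.{0} :=
  if ∃ Q, IsMad H Q then sInf {c | ∃ Q, IsMad H Q ∧ Cardinal.lift.{1} c = #Q}
  else 2 ^ Order.succ (downCard #(smallSet κ lam))

/-- Weak `π`-point. -/
def WeakPiPoint {κ lam : Cardinal.{0}} (H : IdealP κ lam) : Prop :=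
  ∀ f : Ordinal.{0} → Set (Set Ordinal.{0}), (∀ α < κ.ord, f α ∈ H.mem) →
    ∀ A ∈ H.plus, ∃ B ∈ H.plus, B ⊆ A ∧ ∀ α < κ.ord, B ∩ f α ∈ Ikl κ lam

/-- `∪(a ∩ κ)`. -/
def supK (κ : Cardinal.{0}) (a : Set Ordinal.{0}) : Ordinal.{0} :=
  sSup (a ∩ Iio κ.ord)

/-- The relation `a ≺ b`. -/
def prec (κ : Cardinal.{0}) (a b : Set Ordinal.{0}) : Prop :=
  a ⊆ b ∧ supK κ a < supK κ b

/-- `[A]_κ²`. -/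
def pairsK (κ : Cardinal.{0}) (A : Set (Set Ordinal.{0})) : Set (Ordinal.{0} × Set Ordinal.{0}) :=
  {p | ∃ a ∈ A, ∃ b ∈ A, supK κ a < supK κ b ∧ p = (supK κ a, b)}

/-- `[A]_≺²`. -/
def pairsPrec (κ : Cardinal.{0}) (A : Set (Set Ordinal.{0})) :
    Set (Ordinal.{0} × Set Ordinal.{0}) :=
  {p | ∃ a ∈ A, ∃ b ∈ A, prec κ a b ∧ p = (supK κ a, b)}

/-- `[A]_{κ,κ}²`. -/
def pairsKK (κ : Cardinal.{0}) (A : Set (Set Ordinal.{0})) : Set (Ordinal.{0} × Ordinal.{0}) :=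
  {p | ∃ a ∈ A, ∃ b ∈ A, supK κ a < supK κ b ∧ p = (supK κ a, supK κ b)}

/-- `S` is a set of ordinals of order type `α`. -/
def OrdType (S : Set Ordinal.{0}) (α : Ordinal.{0}) : Prop :=
  ∃ e : Ordinal.{0} → Ordinal.{0},
    (∀ i < α, ∀ j < α, i < j → e i < e j) ∧ e '' Iio α = S

/-- `(B, ≺)` has order type `α`. -/
def OrdTypePrec (κ : Cardinal.{0}) (B : Set (Set Ordinal.{0})) (α : Ordinal.{0}) : Prop :=
  ∃ e : Ordinal.{0} → Set Ordinal.{0},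
    (∀ i < α, ∀ j < α, i < j → prec κ (e i) (e j)) ∧ e '' Iio α = B

/-- The partition relation `κ → (κ, θ)²`. -/
def ArrowKTheta (κ : Cardinal.{0}) (θ : Ordinal.{0}) : Prop :=
  ∀ f : Ordinal.{0} → Ordinal.{0} → Fin 2, ∃ A ⊆ Iio κ.ord,
    (OrdType A κ.ord ∧ ∀ α ∈ A, ∀ β ∈ A, α < β → f α β = 0) ∨
    (OrdType A θ ∧ ∀ α ∈ A, ∀ β ∈ A, α < β → f α β = 1)

/-- `κ` is weakly compact. -/
def WeaklyCompact (κ : Cardinal.{0}) : Prop :=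
  ∀ f : Ordinal.{0} → Ordinal.{0} → Fin 2, ∃ A ⊆ Iio κ.ord,
    OrdType A κ.ord ∧ ∃ i, ∀ α ∈ A, ∀ β ∈ A, α < β → f α β = i

/-- The partition relation `J⁺ → (J⁺, α)²` for an ideal on `κ`. -/
def ArrowJ {κ : Cardinal.{0}} (J : IdealK κ) (α : Ordinal.{0}) : Prop :=
  ∀ A ∈ J.plus, ∀ f : Ordinal.{0} → Ordinal.{0} → Fin 2,
    ∃ B ⊆ A, (B ∈ J.plus ∧ ∀ β ∈ B, ∀ γ ∈ B, β < γ → f β γ = 0) ∨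
             (OrdType B α ∧ ∀ β ∈ B, ∀ γ ∈ B, β < γ → f β γ = 1)

/-- The square bracket relation `J⁺ → [J⁺]_ρ²` for an ideal on `κ`. -/
def SqBrJ {κ : Cardinal.{0}} (J : IdealK κ) (ρ : Cardinal.{0}) : Prop :=
  ∀ A ∈ J.plus, ∀ f : Ordinal.{0} → Ordinal.{0} → Ordinal.{0},
    (∀ β ∈ A, ∀ γ ∈ A, β < γ → f β γ < ρ.ord) →
    ∃ B ∈ J.plus, B ⊆ A ∧ {ξ | ∃ β ∈ B, ∃ γ ∈ B, β < γ ∧ f β γ = ξ} ≠ Iio ρ.ord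

/-- `H⁺ →_κ (H⁺, α)²`. -/
def ArrowP (κ lam : Cardinal.{0}) (Hm : Set (Set (Set Ordinal.{0}))) (α : Ordinal.{0}) : Prop :=
  ∀ F : Ordinal.{0} → Set Ordinal.{0} → Fin 2, ∀ A ∈ plusOf κ lam Hm,
    ∃ B ⊆ A, (B ∈ plusOf κ lam Hm ∧ ∀ p ∈ pairsK κ B, F p.1 p.2 = 0) ∨
             (OrdTypePrec κ B α ∧ ∀ p ∈ pairsK κ B, F p.1 p.2 = 1)

/-- `H⁺ →_{κ,κ} (H⁺, α)²`. -/
def ArrowPKK (κ lam : Cardinal.{0}) (Hm : Set (Set (Set Ordinal.{0}))) (α : Ordinal.{0}) : Prop :=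
  ∀ F : Ordinal.{0} → Ordinal.{0} → Fin 2, ∀ A ∈ plusOf κ lam Hm,
    ∃ B ⊆ A, (B ∈ plusOf κ lam Hm ∧ ∀ p ∈ pairsKK κ B, F p.1 p.2 = 0) ∨
             (OrdTypePrec κ B α ∧ ∀ p ∈ pairsKK κ B, F p.1 p.2 = 1)

/-- `H⁺ →_{κ,κ} (H⁺; α)²`. -/
def ArrowPKKsemi (κ lam : Cardinal.{0}) (Hm : Set (Set (Set Ordinal.{0}))) (α : Ordinal.{0}) :
    Prop :=
  ∀ F : Ordinal.{0} → Ordinal.{0} → Fin 2, ∀ A ∈ plusOf κ lam Hm,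
    ∃ B ⊆ A, (B ∈ plusOf κ lam Hm ∧ ∀ p ∈ pairsKK κ B, F p.1 p.2 = 0) ∨
             (OrdType {o | ∃ a ∈ B, supK κ a = o} α ∧ ∀ p ∈ pairsKK κ B, F p.1 p.2 = 1)

/-- `H⁺ →_κ (H⁺)²`. -/
def ArrowPConst (κ lam : Cardinal.{0}) (Hm : Set (Set (Set Ordinal.{0}))) : Prop :=
  ∀ F : Ordinal.{0} → Set Ordinal.{0} → Fin 2, ∀ A ∈ plusOf κ lam Hm,
    ∃ B ∈ plusOf κ lam Hm, B ⊆ A ∧ ∃ i, ∀ p ∈ pairsK κ B, F p.1 p.2 = i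

/-- `H⁺ →_{κ,κ} [H⁺]_ρ²`. -/
def SqBrPKK (κ lam : Cardinal.{0}) (Hm : Set (Set (Set Ordinal.{0}))) (ρ : Cardinal.{0}) : Prop :=
  ∀ F : Ordinal.{0} → Ordinal.{0} → Ordinal.{0},
    (∀ α β : Ordinal.{0}, α < β → β < κ.ord → F α β < ρ.ord) →
    ∀ A ∈ plusOf κ lam Hm, ∃ B ∈ plusOf κ lam Hm, B ⊆ A ∧
      {ξ | ∃ p ∈ pairsKK κ B, F p.1 p.2 = ξ} ≠ Iio ρ.ord

/-- The class `K(κ,λ)`. -/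
def Kset (κ lam : Cardinal.{0}) : Set Cardinal.{0} :=
  {σ | lam ≤ σ ∧ ∃ T ⊆ smallSet κ lam, Cardinal.lift.{1} σ = #T ∧
    ∀ a ∈ smallSet κ lam, #{t ∈ T | t ⊆ a} < Cardinal.lift.{1} κ}

end

end PaperFormal

/-!
Fix `A ∈ J⁺`, a `<κ`-to-one `f` on `A`, and a family `X ⊆ J` of size `cof(J)` cofinal in `J`.
Since `{α ∈ A | f α < γ}` is a union of fewer than `κ` small sets, for `B ∈ X` and `ξ < κ` we can
choose `g_B(ξ) ∈ A ∖ B` with `f(g_B(ξ)) ≥ max(ξ, ω)`. There are fewer than `U_κ` functions `g_B`,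
so some `h` agrees with each of them somewhere. The set `C` of those `h(ξ) ∈ A` with
`ω ≤ f(h(ξ))` and `ξ ≤ f(h(ξ))` meets every `A ∖ B`, hence is `J`-positive, and its fibre over `β`
lies in `h[β + 1]`, of size `|β|`.

For the inequality we need some ideal that is not a weak semi-Q-point. Let `f(α) = max(ω, |α|)`,
read as an initial ordinal; as `κ` is a limit cardinal its fibres have size `< κ`. By regularity
the sets covered by fewer than `κ` slim sets for `f` form a `κ`-complete ideal, and it is proper:
the fibre of `f` over `μ` is `[μ, μ⁺)`, while `μ` slim sets cover at most `μ` of its points.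
A witness `C` of the weak semi-Q-point property for `f` on `κ` would be slim, hence in the ideal.
-/

namespace PaperFormal

open Cardinal Set
open scoped Ordinal

theorem leastCard_le {X : Type 1} {P : Set X → Prop} {F : Set X} (hF : P F) {c : Cardinal.{0}}
    (hc : #F ≤ lift.{1} c) : leastCard P ≤ c := by
  obtain ⟨d, hdc, hd⟩ := le_lift_iff.mp hc
  exact (csInf_le' (s := {c : Cardinal.{0} | ∃ F, P F ∧ lift.{1} c = #F}) ⟨F, hF, hd⟩).trans hdc

theorem exists_lift_leastCard_eq {X : Type 1} {P : Set X → Prop} {F : Set X} (hF : P F)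
    {c : Cardinal.{0}} (hc : #F ≤ lift.{1} c) : ∃ F, P F ∧ lift.{1} (leastCard P) = #F := by
  obtain ⟨d, -, hd⟩ := le_lift_iff.mp hc
  obtain ⟨F', hF', hF'card⟩ := csInf_mem (s := {c : Cardinal.{0} | ∃ F, P F ∧ lift.{1} c = #F})
    ⟨d, F, hF, hd⟩
  exact ⟨F', hF', hF'card⟩

theorem exists_eq_of_card_lt_uneq {κ c : Cardinal.{0}} {F : Set (Ordinal.{0} → Ordinal.{0})}
    (hF : F ⊆ funOn κ) (hFc : #F ≤ lift.{1} c) (hc : c < uneq κ) :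
    ∃ h ∈ funOn κ, ∀ f ∈ F, ∃ α < κ.ord, f α = h α := by
  by_contra! hne
  refine (leastCard_le ⟨hF, fun g hg => ?_⟩ hFc).not_gt hc
  obtain ⟨f, hf, hfg⟩ := hne g hg
  exact ⟨f, hf, eq_empty_of_forall_notMem fun α ⟨hα, heq⟩ => hfg α hα heq⟩

def IsSlim (f : Ordinal.{0} → Ordinal.{0}) (C : Set Ordinal.{0}) : Prop :=
  ∀ β, #{α ∈ C | f α = β} ≤ lift.{1} β.card

theorem mk_Iic_ordinal {β : Ordinal.{0}} (hβ : ω ≤ β) : #(Iic β) = lift.{1} β.card := by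
  rw [← Order.Iio_succ, Order.succ_eq_add_one, mk_Iio_ordinal, Ordinal.card_add_one, lift_add,
    lift_one, add_one_eq (aleph0_le_lift.mpr (Ordinal.aleph0_le_card.mpr hβ))]

theorem isSlim_of_subset_image {f h : Ordinal.{0} → Ordinal.{0}} {C : Set Ordinal.{0}}
    (hC : ∀ α ∈ C, ω ≤ f α ∧ ∃ ξ ≤ f α, h ξ = α) : IsSlim f C := by
  intro β
  by_cases hβ : ω ≤ β
  · calc #{α ∈ C | f α = β} ≤ #(h '' Iic β) := mk_le_mk_of_subset fun α ⟨hαC, hαβ⟩ => by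
          obtain ⟨-, ξ, hξ, rfl⟩ := hC α hαC
          exact ⟨ξ, hαβ ▸ hξ, rfl⟩
      _ ≤ #(Iic β) := mk_image_le
      _ = lift.{1} β.card := mk_Iic_ordinal hβ
  · have : {α ∈ C | f α = β} = ∅ :=
      eq_empty_of_forall_notMem fun α ⟨hαC, hαβ⟩ => hβ (hαβ ▸ (hC α hαC).1)
    simp [this]

namespace IdealK

variable {κ : Cardinal.{0}} (J : IdealK κ)

theorem exists_cofinal_card_eq_cof :
    ∃ X ⊆ J.mem, (∀ A ∈ J.mem, ∃ B ∈ X, A ⊆ B) ∧ #X = lift.{1} J.cof := by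
  have hcard : #J.mem ≤ lift.{1} (2 ^ κ) := by
    calc #J.mem ≤ #(𝒫 Iio κ.ord) := mk_le_mk_of_subset J.subset_iio
      _ = lift.{1} (2 ^ κ) := by simp [mk_Iio_ordinal]
  obtain ⟨X, ⟨hXJ, hXcof⟩, hXcard⟩ := exists_lift_leastCard_eq
    (P := fun X => X ⊆ J.mem ∧ ∀ A, A ∈ J.mem ↔ ∃ B ∈ X, A ⊆ B)
    ⟨subset_rfl, fun A => ⟨fun hA => ⟨A, hA, subset_rfl⟩, fun ⟨B, hB, hAB⟩ =>
      J.subset_mem B hB A hAB⟩⟩ hcard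
  exact ⟨X, hXJ, fun A hA => (hXcof A).mp hA, hXcard.symm⟩

theorem mem_of_card_lt {S : Set Ordinal.{0}} (hS : S ⊆ Iio κ.ord) (hc : #S < lift.{1} κ) :
    S ∈ J.mem := by
  rw [← biUnion_of_singleton S, ← sUnion_image]
  exact J.sUnion_mem _ (image_subset_iff.mpr fun α hα => J.singleton_mem α (hS hα))
    (mk_image_le.trans_lt hc)

theorem union_mem (hκ : ℵ₀ ≤ κ) {B D : Set Ordinal.{0}} (hB : B ∈ J.mem) (hD : D ∈ J.mem) :
    B ∪ D ∈ J.mem := by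
  rw [← sUnion_pair]
  refine J.sUnion_mem _ (pair_subset hB hD) ((mk_insert_le.trans ?_).trans_lt
    ((natCast_lt_aleph0 (n := 2)).trans_le (aleph0_le_lift.mpr hκ)))
  rw [mk_singleton]; norm_num

theorem sep_lt_mem {A : Set Ordinal.{0}} (hA : A ⊆ Iio κ.ord) {f : Ordinal.{0} → Ordinal.{0}}
    (hf : ∀ β, #{α ∈ A | f α = β} < lift.{1} κ) {γ : Ordinal.{0}} (hγ : γ < κ.ord) :
    {α ∈ A | f α < γ} ∈ J.mem := by
  have heq : {α ∈ A | f α < γ} = ⋃₀ ((fun β => {α ∈ A | f α = β}) '' Iio γ) := by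
    ext α
    simp
  rw [heq]
  refine J.sUnion_mem _ (image_subset_iff.mpr fun β _ =>
    J.mem_of_card_lt (fun α hα => hA hα.1) (hf β)) (mk_image_le.trans_lt ?_)
  rw [mk_Iio_ordinal, lift_lt]
  exact lt_ord.mp hγ

theorem exists_mem_notMem_le {A : Set Ordinal.{0}} (hA : A ∈ J.plus) (hκ : ℵ₀ ≤ κ)
    {f : Ordinal.{0} → Ordinal.{0}} (hf : ∀ β, #{α ∈ A | f α = β} < lift.{1} κ)
    {B : Set Ordinal.{0}} (hB : B ∈ J.mem) {γ : Ordinal.{0}} (hγ : γ < κ.ord) :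
    ∃ α ∈ A, α ∉ B ∧ γ ≤ f α := by
  by_contra! h
  refine hA.2 (J.subset_mem _ (J.union_mem hκ hB (J.sep_lt_mem hA.1 hf hγ)) A fun α hα => ?_)
  by_cases hαB : α ∈ B
  · exact Or.inl hαB
  · exact Or.inr ⟨hα, h α hα hαB⟩

end IdealK

theorem weakSemiQPoint_of_cof_lt_uneq {κ : Cardinal.{0}} (huc : ℵ₀ < κ) (J : IdealK κ)
    (hcof : J.cof < uneq κ) : WeakSemiQPoint J := by
  intro A hA f _ hf
  obtain ⟨X, hXJ, hXcof, hXcard⟩ := J.exists_cofinal_card_eq_cof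
  have hsel : ∀ B ∈ X, ∀ ξ < κ.ord, ∃ α ∈ A, α ∉ B ∧ max ξ ω ≤ f α := fun B hB ξ hξ =>
    J.exists_mem_notMem_le hA huc.le hf (hXJ hB) (max_lt hξ (omega0_lt_ord.mpr huc))
  choose! g hgA hgB hgf using hsel
  obtain ⟨h, -, hh⟩ := exists_eq_of_card_lt_uneq (F := g '' X)
    (image_subset_iff.mpr fun B hB ξ hξ => hA.1 (hgA B hB ξ hξ))
    (mk_image_le.trans hXcard.le) hcof
  -- `h` agrees with every `g B` somewhere, so `C` meets `A \ B` for each `B ∈ X`.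
  set C := {α ∈ A | ω ≤ f α ∧ ∃ ξ ≤ f α, ξ < κ.ord ∧ h ξ = α}
  refine ⟨C, ⟨fun α hα => hA.1 hα.1, fun hC => ?_⟩, sep_subset _ _, fun β _ => ?_⟩
  · obtain ⟨B, hB, hCB⟩ := hXcof C hC
    obtain ⟨ξ, hξ, hgh⟩ := hh (g B) (mem_image_of_mem g hB)
    have hξf := max_le_iff.mp (hgf B hB ξ hξ)
    exact hgB B hB ξ hξ (hCB ⟨hgA B hB ξ hξ, hξf.2, ξ, hξf.1, hξ, hgh.symm⟩)
  · exact isSlim_of_subset_image (h := h)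
      (by rintro α ⟨-, hωf, ξ, hξf, -, hξα⟩; exact ⟨hωf, ξ, hξf, hξα⟩) β

theorem isSlim_singleton {f : Ordinal.{0} → Ordinal.{0}} {α : Ordinal.{0}} (h : ω ≤ f α) :
    IsSlim f {α} := by
  intro β
  by_cases hβ : f α = β
  · calc #{γ ∈ ({α} : Set Ordinal.{0}) | f γ = β} ≤ #({α} : Set Ordinal.{0}) :=
          mk_le_mk_of_subset (sep_subset _ _)
      _ = 1 := mk_singleton α
      _ ≤ lift.{1} β.card :=
          one_le_aleph0.trans (aleph0_le_lift.mpr (Ordinal.aleph0_le_card.mpr (hβ ▸ h)))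
  · have : {γ ∈ ({α} : Set Ordinal.{0}) | f γ = β} = ∅ :=
      eq_empty_of_forall_notMem fun γ ⟨hγ, hγβ⟩ => hβ (mem_singleton_iff.mp hγ ▸ hγβ)
    rw [this]
    simp

theorem isSlim_of_forall_lt {f : Ordinal.{0} → Ordinal.{0}} {C : Set Ordinal.{0}} {o : Ordinal.{0}}
    (hf : ∀ α ∈ C, f α < o) (h : ∀ β < o, #{α ∈ C | f α = β} ≤ lift.{1} β.card) :
    IsSlim f C := by
  intro β
  by_cases hβ : β < o
  · exact h β hβ
  · have : {α ∈ C | f α = β} = ∅ :=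
      eq_empty_of_forall_notMem fun α ⟨hα, hαβ⟩ => hβ (hαβ ▸ hf α hα)
    simp [this]

noncomputable def cardOrd (α : Ordinal.{0}) : Ordinal.{0} := max ω α.card.ord

theorem omega0_le_cardOrd (α : Ordinal.{0}) : ω ≤ cardOrd α := le_max_left _ _

theorem cardOrd_lt_ord {κ : Cardinal.{0}} (huc : ℵ₀ < κ) {α : Ordinal.{0}} (hα : α < κ.ord) :
    cardOrd α < κ.ord :=
  max_lt (omega0_lt_ord.mpr huc) (by rwa [lt_ord, card_ord, ← lt_ord])

theorem cardOrd_eq_of_mem_Ico {μ : Cardinal.{0}} (hμ : ℵ₀ ≤ μ) {α : Ordinal.{0}}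
    (hα : α ∈ Ico μ.ord (Order.succ μ).ord) : cardOrd α = μ.ord := by
  have hαμ : α.card = μ := le_antisymm (Order.lt_succ_iff.mp (lt_ord.mp hα.2))
    (by simpa using Ordinal.card_le_card hα.1)
  rw [cardOrd, hαμ, max_eq_right (by simpa using ord_le_ord.mpr hμ)]

theorem lt_ord_succ_card_of_cardOrd_eq {α β : Ordinal.{0}} (h : cardOrd α = β) :
    α < (Order.succ β.card).ord := by
  have hαβ : α.card.ord ≤ β := h ▸ le_max_right _ _
  replace hαβ : α.card ≤ β.card := by simpa using Ordinal.card_le_card hαβ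
  exact lt_ord.mpr (Order.lt_succ_of_le hαβ)

theorem card_sep_cardOrd_eq_lt {κ : Cardinal.{0}} (huc : ℵ₀ < κ) (hlim : Order.IsSuccPrelimit κ)
    (β : Ordinal.{0}) : #{α ∈ Iio κ.ord | cardOrd α = β} < lift.{1} κ := by
  by_cases hβ : β < κ.ord
  · calc #{α ∈ Iio κ.ord | cardOrd α = β} ≤ #(Iio (Order.succ β.card).ord) :=
          mk_le_mk_of_subset fun α hα => lt_ord_succ_card_of_cardOrd_eq hα.2
      _ < lift.{1} κ := by
          rw [mk_Iio_ordinal, card_ord, lift_lt]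
          exact hlim.succ_lt (lt_ord.mp hβ)
  · have : {α ∈ Iio κ.ord | cardOrd α = β} = ∅ :=
      eq_empty_of_forall_notMem fun α ⟨hα, hαβ⟩ => hβ (hαβ ▸ cardOrd_lt_ord huc hα)
    rw [this]
    simpa using aleph0_pos.trans huc

theorem lift_lt_mk_Ico_ord_succ {μ : Cardinal.{0}} (hμ : ℵ₀ ≤ μ) :
    lift.{1} μ < #(Ico μ.ord (Order.succ μ).ord) := by
  by_contra! h
  refine (Order.lt_succ μ).not_ge (lift_le.{1}.mp ?_)
  calc lift.{1} (Order.succ μ) = #(Iio μ.ord ∪ Ico μ.ord (Order.succ μ).ord : Set Ordinal.{0}) := by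
        rw [Iio_union_Ico_eq_Iio (ord_le_ord.mpr (Order.le_succ μ)), mk_Iio_ordinal, card_ord]
    _ ≤ lift.{1} μ + lift.{1} μ := by
        grw [mk_union_le, mk_Iio_ordinal, card_ord, h]
    _ = lift.{1} μ := add_eq_self (aleph0_le_lift.mpr hμ)

theorem not_Ico_subset_sUnion_of_isSlim {μ : Cardinal.{0}} (hμ : ℵ₀ ≤ μ)
    {X : Set (Set Ordinal.{0})} (hX : #X ≤ lift.{1} μ) (hslim : ∀ C ∈ X, IsSlim cardOrd C) :
    ¬ Ico μ.ord (Order.succ μ).ord ⊆ ⋃₀ X := by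
  intro hsub
  refine (lift_lt_mk_Ico_ord_succ hμ).not_ge ?_
  calc #(Ico μ.ord (Order.succ μ).ord) ≤ #(⋃ C ∈ X, {α ∈ C | cardOrd α = μ.ord}) :=
        mk_le_mk_of_subset fun α hα => by
          obtain ⟨C, hC, hαC⟩ := hsub hα
          exact mem_biUnion hC ⟨hαC, cardOrd_eq_of_mem_Ico hμ hα⟩
    _ ≤ #X * ⨆ C : X, #{α ∈ C.1 | cardOrd α = μ.ord} := mk_biUnion_le _ _
    _ ≤ lift.{1} μ * lift.{1} μ :=
        mul_le_mul' hX (ciSup_le' fun C => by simpa using hslim C C.2 μ.ord)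
    _ = lift.{1} μ := mul_eq_self (aleph0_le_lift.mpr hμ)

def slimCovered (κ : Cardinal.{0}) : Set (Set Ordinal.{0}) :=
  {Z | Z ⊆ Iio κ.ord ∧ ∃ X : Set (Set Ordinal.{0}), #X < lift.{1} κ ∧
    (∀ C ∈ X, IsSlim cardOrd C) ∧ Z ⊆ ⋃₀ X}

section SlimCovered

variable {κ : Cardinal.{0}}

theorem mem_slimCovered_of_isSlim (huc : ℵ₀ < κ) {C : Set Ordinal.{0}} (hC : C ⊆ Iio κ.ord)
    (hslim : IsSlim cardOrd C) : C ∈ slimCovered κ := by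
  refine ⟨hC, {C}, ?_, fun D hD => mem_singleton_iff.mp hD ▸ hslim, by simp⟩
  rw [mk_singleton]
  exact one_lt_aleph0.trans_le (aleph0_le_lift.mpr huc.le)

theorem sUnion_mem_slimCovered (hreg : κ.IsRegular) {Y : Set (Set Ordinal.{0})}
    (hY : Y ⊆ slimCovered κ) (hYκ : #Y < lift.{1} κ) : ⋃₀ Y ∈ slimCovered κ := by
  choose W hWκ hWslim hWcov using fun Z : Y => (hY Z.2).2
  refine ⟨sUnion_subset fun Z hZ => (hY hZ).1, ⋃ Z, W Z,
    (card_iUnion_lt_iff_forall_of_isRegular hreg.lift hYκ).mpr hWκ, fun C hC => ?_,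
    sUnion_subset fun Z hZ => (hWcov ⟨Z, hZ⟩).trans (sUnion_mono (subset_iUnion W ⟨Z, hZ⟩))⟩
  obtain ⟨Z, hZ⟩ := mem_iUnion.mp hC
  exact hWslim Z C hZ

theorem Iio_notMem_slimCovered (huc : ℵ₀ < κ) : Iio κ.ord ∉ slimCovered κ := by
  rintro ⟨-, X, hXκ, hslim, hcov⟩
  obtain ⟨lam, -, hlam⟩ := le_lift_iff.mp hXκ.le
  have hμκ : max lam ℵ₀ < κ := max_lt (lift_lt.mp (hlam ▸ hXκ)) huc
  refine not_Ico_subset_sUnion_of_isSlim (le_max_right _ _)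
    (hlam ▸ lift_le.mpr (le_max_left _ _)) hslim fun α hα => hcov ?_
  exact hα.2.trans_le (ord_le_ord.mpr (Order.succ_le_of_lt hμκ))

end SlimCovered

noncomputable def slimIdeal {κ : Cardinal.{0}} (hreg : κ.IsRegular) (huc : ℵ₀ < κ) : IdealK κ where
  mem := slimCovered κ
  subset_iio _ hZ := hZ.1
  singleton_mem α hα := mem_slimCovered_of_isSlim huc (singleton_subset_iff.mpr hα)
    (isSlim_singleton (omega0_le_cardOrd α))
  subset_mem _ hZ _ hZ' := ⟨hZ'.trans hZ.1, hZ.2.imp fun _ h => ⟨h.1, h.2.1, hZ'.trans h.2.2⟩⟩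
  sUnion_mem _ := sUnion_mem_slimCovered hreg
  ne_top := Iio_notMem_slimCovered huc

theorem not_weakSemiQPoint_slimIdeal {κ : Cardinal.{0}} (hreg : κ.IsRegular) (huc : ℵ₀ < κ)
    (hlim : Order.IsSuccPrelimit κ) : ¬ WeakSemiQPoint (slimIdeal hreg huc) := by
  intro hW
  obtain ⟨C, hC, -, hCslim⟩ := hW (Iio κ.ord) ⟨subset_rfl, Iio_notMem_slimCovered huc⟩ cardOrd
    (fun α => cardOrd_lt_ord huc) (card_sep_cardOrd_eq_lt huc hlim)
  exact hC.2 (mem_slimCovered_of_isSlim huc hC.1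
    (isSlim_of_forall_lt (fun α hα => cardOrd_lt_ord huc (hC.1 hα)) hCslim))

/-- If `κ` is a regular limit cardinal, then every ideal `J` on `κ` with
`cof(J) < U_κ` is a weak semi-`Q`-point; consequently `U_κ ≤ non_κ(weak semi-Q-point)`. -/
theorem uneq_le_non_weakSemiQPoint (κ : Cardinal.{0}) (hreg : κ.IsRegular) (huc : ℵ₀ < κ)
    (hlim : κ ≠ 0 ∧ Order.IsSuccPrelimit κ) :
    (∀ J : IdealK κ, J.cof < uneq κ → WeakSemiQPoint J) ∧
      uneq κ ≤ nonK κ (fun J => WeakSemiQPoint J) := by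
  have hsemiQ : ∀ J : IdealK κ, J.cof < uneq κ → WeakSemiQPoint J :=
    weakSemiQPoint_of_cof_lt_uneq huc
  refine ⟨hsemiQ, le_csInf ⟨_, slimIdeal hreg huc, rfl,
    not_weakSemiQPoint_slimIdeal hreg huc hlim.2⟩ ?_⟩
  rintro _ ⟨J, rfl, hJ⟩
  exact not_lt.mp fun h => hJ (hsemiQ J h)

end PaperFormal
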